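/- arXiv:math/0402344 — 2 statements merged into one kernel-verified Lean document; each statement's English description precedes it below -/
import Mathlib

section
/- For all integers n ≥ k ≥ 1, the Fibonomial coefficient C_F(n,k) = F_n! / (F_k! · F_{n-k}!) is a positive integer, where F_m! denotes the product F_1·F_2·…·F_m of the first m Fibonacci numbers. -/
/-- Fibonacci factorial: product of the first `n` Fibonacci numbers. -/
def fibFact (n : ℕ) : ℕ := ∏ i ∈ Finset.range n, Nat.fib (i + 1)

/-- Fibonomial coefficient `C_F(n,k) = F_n! / (F_k! · F_{n-k}!)`, zero for `k > n`. -/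
def fibnomial (n k : ℕ) : ℕ :=
  if k ≤ n then fibFact n / (fibFact k * fibFact (n - k)) else 0

/-!
The addition formula `F (k + m + 2) = F k * F (m + 1) + F (k + 1) * F (m + 2)` yields a
Pascal-type rule for Fibonomial coefficients, so the recursion it defines produces natural
numbers which, multiplied by `F_k! * F_m!`, give `F_(k+m)!`. Positivity follows because
`F_n!` is a product of positive Fibonacci numbers.
-/

/-- `fibnomialRec a b = C_F(a + b, a)`, indexed by the two factorial arguments of the
denominator so that no truncated subtraction occurs. -/
def fibnomialRec : ℕ → ℕ → ℕ
  | 0, _ => 1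
  | _, 0 => 1
  | k + 1, m + 1 =>
    Nat.fib (m + 2) * fibnomialRec k (m + 1) + Nat.fib k * fibnomialRec (k + 1) m

lemma fibFact_pos (n : ℕ) : 0 < fibFact n :=
  Finset.prod_pos fun i _ => Nat.fib_pos.2 i.succ_pos

lemma fibFact_succ (n : ℕ) : fibFact (n + 1) = fibFact n * Nat.fib (n + 1) :=
  Finset.prod_range_succ _ _

lemma fibFact_mul_fibFact_mul_fibnomialRec :
    ∀ a b : ℕ, fibFact a * fibFact b * fibnomialRec a b = fibFact (a + b)
  | 0, b => by simp [fibnomialRec, fibFact]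
  | k + 1, 0 => by simp [fibnomialRec, fibFact]
  | k + 1, m + 1 => by
    have ih₁ : fibFact k * fibFact (m + 1) * fibnomialRec k (m + 1) = fibFact (k + m + 1) :=
      fibFact_mul_fibFact_mul_fibnomialRec k (m + 1)
    have ih₂ : fibFact (k + 1) * fibFact m * fibnomialRec (k + 1) m = fibFact (k + m + 1) := by
      rw [Nat.add_right_comm]; exact fibFact_mul_fibFact_mul_fibnomialRec (k + 1) m
    have hfib : Nat.fib (k + m + 2) =
        Nat.fib k * Nat.fib (m + 1) + Nat.fib (k + 1) * Nat.fib (m + 2) :=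
      Nat.fib_add k (m + 1)
    calc fibFact (k + 1) * fibFact (m + 1) * fibnomialRec (k + 1) (m + 1)
        = Nat.fib (k + 1) * Nat.fib (m + 2) *
              (fibFact k * fibFact (m + 1) * fibnomialRec k (m + 1)) +
            Nat.fib k * Nat.fib (m + 1) *
              (fibFact (k + 1) * fibFact m * fibnomialRec (k + 1) m) := by
          rw [fibnomialRec, fibFact_succ k, fibFact_succ m]; ring
      _ = fibFact (k + m + 1) * Nat.fib (k + m + 2) := by rw [ih₁, ih₂, hfib]; ring
      _ = fibFact (k + 1 + (m + 1)) := by rw [← fibFact_succ]; ring_nf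

lemma fibFact_mul_fibFact_dvd (a b : ℕ) : fibFact a * fibFact b ∣ fibFact (a + b) :=
  ⟨fibnomialRec a b, (fibFact_mul_fibFact_mul_fibnomialRec a b).symm⟩

theorem fibnomial_pos_int_general (n k : ℕ) (hkn : k ≤ n) :
    fibFact k * fibFact (n - k) ∣ fibFact n ∧
      0 < fibFact n / (fibFact k * fibFact (n - k)) := by
  obtain ⟨m, rfl⟩ := Nat.exists_eq_add_of_le hkn
  rw [Nat.add_sub_cancel_left]
  have hdvd := fibFact_mul_fibFact_dvd k m
  refine ⟨hdvd, Nat.div_pos (Nat.le_of_dvd (fibFact_pos _) hdvd) ?_⟩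
  exact Nat.mul_pos (fibFact_pos k) (fibFact_pos m)

theorem fibnomial_pos_int (n k : ℕ) (hk : 1 ≤ k) (hkn : k ≤ n) :
    fibFact k * fibFact (n - k) ∣ fibFact n ∧
      0 < fibFact n / (fibFact k * fibFact (n - k)) :=
  fibnomial_pos_int_general n k hkn
end

section
/- With weight vector w = (1, q, q^2, …, q^{n-1}), the Konvalina coefficient of the second kind equals the Gaussian binomial coefficient: S_k^n(w) = binomial(n+k-1, k)_q as polynomials in q. -/
/-!
Splitting off the multiplicity of the largest index `n + 1` gives the Pascal-type recurrence
`S_{k+1}^{n+1} = S_{k+1}^n + q^n S_k^{n+1}`. The cleared Gaussian coefficients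
`∏_{i ≤ k} (1 - q^{n-1+i})` satisfy the same recurrence after multiplication by
`∏_{i ≤ k} (1 - q^i)`, because
`(1 - q^n) + q^n (1 - q^{k+1}) = 1 - q^{n+k+1}`; a double induction on `n` and `k` finishes.
-/

open Polynomial

/-- Konvalina's generalized binomial coefficient of the second kind,
with polynomial weights. -/
noncomputable def konvalinaS (w : ℕ → Polynomial ℚ) (n k : ℕ) : Polynomial ℚ :=
  ∑ m ∈ (Finset.Icc 1 n).sym k, ((m : Multiset ℕ).map w).prod

open Finset

section CompleteHomogeneous

variable {α R : Type*} [DecidableEq α] [CommSemiring R] (w : α → R)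

/-- The complete homogeneous symmetric polynomial `h_k` evaluated at the weights `w a`, `a ∈ s`. -/
def completeHomogeneous (s : Finset α) (k : ℕ) : R :=
  ∑ m ∈ s.sym k, ((m : Multiset α).map w).prod

@[simp]
theorem completeHomogeneous_zero (s : Finset α) : completeHomogeneous w s 0 = 1 := by
  rw [completeHomogeneous, sym_zero, sum_singleton]
  rfl

theorem completeHomogeneous_singleton (a : α) (k : ℕ) :
    completeHomogeneous w {a} k = w a ^ k := by
  simp [completeHomogeneous, Sym.coe_replicate]

theorem completeHomogeneous_insert {a : α} {s : Finset α} (h : a ∉ s) (k : ℕ) :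
    completeHomogeneous w (insert a s) k =
      ∑ i ∈ range (k + 1), w a ^ i * completeHomogeneous w s (k - i) := by
  rw [completeHomogeneous, ← sum_coe_sort, ← (symInsertEquiv h).symm.sum_comp,
    ← univ_sigma_univ, sum_sigma, ← Fin.sum_univ_eq_sum_range]
  refine sum_congr rfl fun i _ => ?_
  rw [completeHomogeneous, mul_sum, ← sum_coe_sort (s.sym (k - i))]
  refine sum_congr rfl fun m _ => ?_
  rw [symInsertEquiv_symm_apply_coe, Sym.coe_fill, Multiset.map_add, Multiset.prod_add,
    Sym.coe_replicate, Multiset.map_replicate, Multiset.prod_replicate, mul_comm]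

theorem completeHomogeneous_insert_succ {a : α} {s : Finset α} (h : a ∉ s) (k : ℕ) :
    completeHomogeneous w (insert a s) (k + 1) =
      completeHomogeneous w s (k + 1) + w a * completeHomogeneous w (insert a s) k := by
  rw [completeHomogeneous_insert w h, completeHomogeneous_insert w h, sum_range_succ', mul_sum]
  simp only [pow_succ', Nat.add_sub_add_right, pow_zero, one_mul, Nat.sub_zero, mul_assoc]
  rw [add_comm]

end CompleteHomogeneous

theorem completeHomogeneous_Icc_succ_succ {R : Type*} [CommSemiring R] (w : ℕ → R) (n k : ℕ) :
    completeHomogeneous w (Icc 1 (n + 1)) (k + 1) =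
      completeHomogeneous w (Icc 1 n) (k + 1) +
        w (n + 1) * completeHomogeneous w (Icc 1 (n + 1)) k := by
  rw [← insert_Icc_right_eq_Icc_add_one (by omega),
    completeHomogeneous_insert_succ w (by simp)]

theorem konvalinaS_eq_completeHomogeneous (w : ℕ → ℚ[X]) (n k : ℕ) :
    konvalinaS w n k = completeHomogeneous w (Icc 1 n) k :=
  rfl

theorem prod_Icc_one_succ_add {M : Type*} [CommMonoid M] (f : ℕ → M) (n k : ℕ) :
    ∏ i ∈ Icc 1 (k + 1), f (n + i) = f (n + 1) * ∏ i ∈ Icc 1 k, f (n + 1 + i) := by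
  induction k with
  | zero => simp
  | succ k ih =>
    rw [prod_Icc_succ_top (by omega), ih, prod_Icc_succ_top (by omega), mul_assoc,
      show n + (k + 1 + 1) = n + 1 + (k + 1) by omega]

theorem completeHomogeneous_geometric_mul_prod {R : Type*} [CommRing R] (q : R) (n k : ℕ) :
    completeHomogeneous (fun i => q ^ (i - 1)) (Icc 1 (n + 1)) k * ∏ i ∈ Icc 1 k, (1 - q ^ i) =
      ∏ i ∈ Icc 1 k, (1 - q ^ (n + i)) := by
  induction n generalizing k with
  | zero => simp [completeHomogeneous_singleton]
  | succ n ihn =>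
    induction k with
    | zero => simp
    | succ k ihk =>
      have hprev := ihn (k + 1)
      rw [prod_Icc_one_succ_add (fun j => 1 - q ^ j)] at hprev
      rw [prod_Icc_succ_top (by omega : 1 ≤ k + 1) (fun i => 1 - q ^ i)] at hprev ⊢
      rw [completeHomogeneous_Icc_succ_succ, prod_Icc_succ_top (by omega : 1 ≤ k + 1)]
      simp only [Nat.add_sub_cancel]
      linear_combination hprev + q ^ (n + 1) * (1 - q ^ (k + 1)) * ihk

/-- With weights `w_i = q^(i-1)`, the Konvalina coefficient of the second kind is the
Gaussian binomial coefficient `(n+k-1 choose k)_q = ∏_{i=1}^k (1-q^{n-1+i})/(1-q^i)`,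
stated as a polynomial identity with denominators cleared. -/
theorem konvalinaS_geometric_eq_gaussian (n k : ℕ) (hn : 1 ≤ n) :
    konvalinaS (fun i => X ^ (i - 1)) n k * ∏ i ∈ Finset.Icc 1 k, (1 - X ^ i) =
      ∏ i ∈ Finset.Icc 1 k, (1 - X ^ (n - 1 + i)) := by
  obtain ⟨m, rfl⟩ := Nat.exists_eq_add_of_le' hn
  simpa [konvalinaS_eq_completeHomogeneous] using
    completeHomogeneous_geometric_mul_prod (X : ℚ[X]) m k
end
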